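/- arXiv:1804.01152 — 2 statements merged into one kernel-verified Lean document; each statement's English description precedes it below -/
import Mathlib

section
/- Given β ≥ 0, there exist α = (α_1, 1) ∈ ℝ² and constants c_1, c_2, c_3 > 0 such that for the linear form L_α(x_1, x_2) = α_1 x_1 + x_2: (i) every best approximation vector z ∈ ℤ² for L_α satisfies c_1·|z|^{−β} ≤ |L_α(z)|·|z| ≤ c_2·|z|^{−β}; (ii) every z ∈ ℤ² with z_1 ≠ 0 which is not an integer multiple of a best approximation vector for L_α satisfies |L_α(z)|·|z| ≥ c_3. -/
open scoped InnerProductSpace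

noncomputable section

/-- `ℝ^n` with the Euclidean structure. -/
abbrev E (n : ℕ) : Type := EuclideanSpace ℝ (Fin n)

/-- The projection `x ↦ x̲` forgetting the last coordinate. -/
def pr (d : ℕ) (x : E d) : E (d - 1) :=
  WithLp.toLp 2 (fun i : Fin (d - 1) => x (Fin.castLE (Nat.sub_le d 1) i))

/-- The canonical embedding of `ℤ^d` into `ℝ^d`. -/
def toE (d : ℕ) (z : Fin d → ℤ) : E d := WithLp.toLp 2 (fun i => (z i : ℝ))

/-- The `m`-dimensional volume of the parallelepiped spanned by `v 0, …, v (m-1)`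
(square root of the Gram determinant). -/
def gramVol {n m : ℕ} (v : Fin m → E n) : ℝ :=
  Real.sqrt ((Matrix.of (fun i j : Fin m => ⟪v i, v j⟫_ℝ)).det)

/-- `z` is a best approximation vector for the linear form `L_α : x ↦ ⟪α, x⟫`. -/
def IsBestApprox (d : ℕ) (α : E d) (z : Fin d → ℤ) : Prop :=
  pr d (toE d z) ≠ 0 ∧
  ∀ z' : Fin d → ℤ, pr d (toE d z') ≠ 0 →
    (‖pr d (toE d z')‖ ≤ ‖pr d (toE d z)‖ → |⟪α, toE d z⟫_ℝ| ≤ |⟪α, toE d z'⟫_ℝ|) ∧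
    (‖pr d (toE d z')‖ < ‖pr d (toE d z)‖ → |⟪α, toE d z⟫_ℝ| < |⟪α, toE d z'⟫_ℝ|)

/-- `det Λ̲_{k,l}` for a sequence of integer vectors: the `l`-dimensional volume of the
parallelepiped spanned by `z̲_k, …, z̲_{k+l-1}`. -/
def detL (d : ℕ) (z : ℕ → Fin d → ℤ) (k l : ℕ) : ℝ :=
  gramVol (fun i : Fin l => pr d (toE d (z (k + i.1))))

/-- `D_{k,l} = det Λ̲_{k,l} / |z̲_k|^l`. -/
def Dq (d : ℕ) (z : ℕ → Fin d → ℤ) (k l : ℕ) : ℝ :=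
  detL d z k l / ‖pr d (toE d (z k))‖ ^ l

/-- `B_k = |z̲_{k+1}| / |z̲_k|`. -/
def Bq (d : ℕ) (z : ℕ → Fin d → ℤ) (k : ℕ) : ℝ :=
  ‖pr d (toE d (z (k + 1)))‖ / ‖pr d (toE d (z k))‖

/-- `R_k = 1 / (2 |z̲_{k+1}| det Λ̲_{k,d-1})`. -/
def Rq (d : ℕ) (z : ℕ → Fin d → ℤ) (k : ℕ) : ℝ :=
  1 / (2 * ‖pr d (toE d (z (k + 1)))‖ * detL d z k (d - 1))

/-- `v 0, …, v (d-1)` form a basis of the lattice `ℤ^d`. -/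
def IsZBasis (d : ℕ) (v : Fin d → Fin d → ℤ) : Prop :=
  IsUnit ((Matrix.of (fun i j : Fin d => v j i)).det)

/-!
Take `α = [0; a_1, a_2, …]` with partial quotients `a_{k+1} = max 2 ⌈q_k ^ β⌉`, so that
`q_k ^ (1 + β) ≤ q_{k+1} ≤ 4 q_k ^ (1 + β)`. Writing `δ_k = |q_k α - p_k|`, the alternating
expansion `α = Σ (-1)^k / (q_k q_{k+1})` gives `3/4 ≤ δ_k q_{k+1} ≤ 1`. Every `z` with
`q_k ≤ |z_0| < q_{k+1}` is `a (q_k, -p_k) + b (q_{k+1}, -p_{k+1})` with `a b ≤ 0`, so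
`|L_α(z)| = |a| δ_k + |b| δ_{k+1} ≥ δ_k`. Hence the `(q_k, -p_k)` are best approximations and
every best approximation has `|z_0| = q_k`, `|L_α(z)| = δ_k` for some `k`, which gives (i) with
`|L_α(z)| |z| ≍ q_k / q_{k+1} ≍ |z|^{-β}`. If `z` is not a multiple of
`(q_k, -p_k)` then `b ≠ 0`, and either `|a| q_k ≥ q_{k+1} / 2` or `|z_0| ≥ q_{k+1} / 2`;
in both cases `|L_α(z)| |z_0| ≥ δ_k q_{k+1} / 2 ≥ 3/8`, which is (ii).
-/

lemma alternating_bounds {x t : ℕ → ℝ} (hx : ∀ k, x (k + 1) = x k + (-1) ^ k * t k)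
    (ht : Antitone t) (ht0 : ∀ k, 0 ≤ t k) (k : ℕ) :
    t k - t (k + 1) ≤ (-1) ^ k * ((⨆ j, x (2 * j)) - x k) ∧
      (-1) ^ k * ((⨆ j, x (2 * j)) - x k) ≤ t k := by
  have hup (j : ℕ) : x (2 * j + 1) = x (2 * j) + t (2 * j) := by
    simpa [pow_mul] using hx (2 * j)
  have hdown (j : ℕ) : x (2 * j + 2) = x (2 * j + 1) - t (2 * j + 1) := by
    simpa [pow_succ, pow_mul, sub_eq_add_neg] using hx (2 * j + 1)
  have hup' (j : ℕ) : x (2 * j + 3) = x (2 * j + 2) + t (2 * j + 2) := hup (j + 1)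
  have heven : Monotone fun j => x (2 * j) := monotone_nat_of_le_succ fun j =>
    show x (2 * j) ≤ x (2 * j + 2) by linarith [hup j, hdown j, ht (Nat.le_succ (2 * j))]
  have hodd : Antitone fun j => x (2 * j + 1) := antitone_nat_of_succ_le fun j =>
    show x (2 * j + 3) ≤ x (2 * j + 1) by
      linarith [hup' j, hdown j, ht (Nat.le_succ (2 * j + 1))]
  have hcross (i j : ℕ) : x (2 * i) ≤ x (2 * j + 1) :=
    calc x (2 * i) ≤ x (2 * max i j) := heven (le_max_left i j)
      _ ≤ x (2 * max i j + 1) := by linarith [hup (max i j), ht0 (2 * max i j)]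
      _ ≤ x (2 * j + 1) := hodd (le_max_right i j)
  have hlo (j : ℕ) : x (2 * j) ≤ ⨆ i, x (2 * i) :=
    le_ciSup ⟨x 1, by rintro _ ⟨i, rfl⟩; simpa using hcross i 0⟩ j
  have hhi (j : ℕ) : (⨆ i, x (2 * i)) ≤ x (2 * j + 1) := ciSup_le fun i => hcross i j
  obtain ⟨m, rfl | rfl⟩ := Nat.even_or_odd' k
  · have hlo' : x (2 * m + 2) ≤ ⨆ i, x (2 * i) := hlo (m + 1)
    rw [pow_mul, neg_one_sq, one_pow, one_mul]
    constructor <;> linarith [hhi m, hup m, hdown m]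
  · have hlo' : x (2 * m + 2) ≤ ⨆ i, x (2 * i) := hlo (m + 1)
    have hhi' : (⨆ i, x (2 * i)) ≤ x (2 * m + 3) := hhi (m + 1)
    have ht' : t (2 * m + 1 + 1) = t (2 * m + 2) := rfl
    rw [pow_succ, pow_mul, neg_one_sq, one_pow, one_mul]
    constructor <;> linarith [hup' m, hdown m]

lemma ne_zero_and_mul_nonpos_of_abs_add_lt {a b x y : ℤ} (hx : 0 ≤ x) (h0 : a * x + b * y ≠ 0)
    (h : |a * x + b * y| < y) : a ≠ 0 ∧ a * b ≤ 0 := by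
  have hy : 0 < y := (abs_nonneg _).trans_lt h
  refine ⟨?_, ?_⟩
  · rintro rfl
    have hb : b ≠ 0 := by rintro rfl; simp at h0
    rw [zero_mul, zero_add, abs_mul, abs_of_pos hy] at h
    nlinarith [Int.one_le_abs hb]
  · by_contra hab
    rcases lt_or_gt_of_ne (right_ne_zero_of_mul (ne_of_gt (not_le.1 hab))) with hb | hb
    · have ha : a < 0 := by nlinarith
      nlinarith [neg_abs_le (a * x + b * y), mul_nonpos_of_nonpos_of_nonneg ha.le hx]
    · have ha : 0 < a := by nlinarith
      nlinarith [le_abs_self (a * x + b * y), mul_nonneg ha.le hx]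

lemma inner_toE_two (a b : ℝ) (z : Fin 2 → ℤ) :
    ⟪!₂[a, b], toE 2 z⟫_ℝ = a * z 0 + b * z 1 := by
  simp [toE, PiLp.inner_apply, Fin.sum_univ_two, mul_comm]

lemma norm_pr_toE_two (z : Fin 2 → ℤ) : ‖pr 2 (toE 2 z)‖ = |(z 0 : ℝ)| := by
  simp [EuclideanSpace.norm_eq, pr, toE, Real.sqrt_sq_eq_abs]

lemma pr_toE_two_ne_zero_iff (z : Fin 2 → ℤ) : pr 2 (toE 2 z) ≠ 0 ↔ z 0 ≠ 0 := by
  rw [← norm_ne_zero_iff, norm_pr_toE_two]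
  simp

lemma abs_le_norm_toE_two (z : Fin 2 → ℤ) : |(z 0 : ℝ)| ≤ ‖toE 2 z‖ :=
  PiLp.norm_apply_le (toE 2 z) 0

lemma norm_toE_two_le (z : Fin 2 → ℤ) : ‖toE 2 z‖ ≤ |(z 0 : ℝ)| + |(z 1 : ℝ)| := by
  rw [EuclideanSpace.norm_eq, Real.sqrt_le_iff]
  refine ⟨by positivity, ?_⟩
  simp only [toE, Fin.sum_univ_two, Real.norm_eq_abs, sq_abs]
  nlinarith [abs_nonneg (z 0 : ℝ), abs_nonneg (z 1 : ℝ), sq_abs (z 0 : ℝ), sq_abs (z 1 : ℝ)]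

namespace Convergents

variable (A : ℤ → ℤ)

/-- `(q_k, p_k)`: the convergents `p_k / q_k` of `[0; a_1, a_2, …]` with partial quotients
`a_{k+1} = A q_k` (and `q_{-1} = 0`, `p_{-1} = 1`). -/
def pair : ℕ → ℤ × ℤ
  | 0 => (1, 0)
  | 1 => (A 1, 1)
  | k + 2 => (A (pair (k + 1)).1 * (pair (k + 1)).1 + (pair k).1,
      A (pair (k + 1)).1 * (pair (k + 1)).2 + (pair k).2)

def den (k : ℕ) : ℤ := (pair A k).1

def num (k : ℕ) : ℤ := (pair A k).2

@[simp] lemma den_zero : den A 0 = 1 := rfl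

@[simp] lemma num_zero : num A 0 = 0 := rfl

@[simp] lemma den_one : den A 1 = A 1 := rfl

@[simp] lemma num_one : num A 1 = 1 := rfl

lemma den_add_two (k : ℕ) : den A (k + 2) = A (den A (k + 1)) * den A (k + 1) + den A k := rfl

lemma num_add_two (k : ℕ) : num A (k + 2) = A (den A (k + 1)) * num A (k + 1) + num A k := rfl

lemma num_succ_mul_den_sub (k : ℕ) :
    num A (k + 1) * den A k - num A k * den A (k + 1) = (-1) ^ k := by
  induction k with
  | zero => simp
  | succ k ih =>
    rw [den_add_two, num_add_two, pow_succ]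
    linarith

def limit : ℝ := ⨆ j, (num A (2 * j) : ℝ) / den A (2 * j)

/-- `|q_k α - p_k|`, the sign of `q_k α - p_k` being `(-1) ^ k`. -/
def err (k : ℕ) : ℝ := (-1) ^ k * (den A k * limit A - num A k)

variable {A}

lemma den_pos (hA : ∀ m, 2 ≤ A m) (k : ℕ) : 0 < den A k := by
  induction k using Nat.twoStepInduction with
  | zero => simp
  | one => simpa using (hA 1).trans_lt' two_pos
  | more k ih₁ ih₂ =>
    rw [den_add_two]
    nlinarith [hA (den A (k + 1))]

lemma two_mul_den_le (hA : ∀ m, 2 ≤ A m) (k : ℕ) : 2 * den A k ≤ den A (k + 1) := by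
  cases k with
  | zero => simpa using hA 1
  | succ k =>
    rw [den_add_two]
    nlinarith [hA (den A (k + 1)), den_pos hA k, den_pos hA (k + 1)]

lemma den_strictMono (hA : ∀ m, 2 ≤ A m) : StrictMono (den A) :=
  strictMono_nat_of_lt_succ fun k => by linarith [two_mul_den_le hA k, den_pos hA k]

lemma den_succ_bounds (hA : ∀ m, 2 ≤ A m) (k : ℕ) :
    A (den A k) * den A k ≤ den A (k + 1) ∧ den A (k + 1) ≤ (A (den A k) + 1) * den A k := by
  cases k with
  | zero => simp
  | succ k =>
    rw [den_add_two]
    constructor <;> linarith [den_pos hA k, den_strictMono hA (Nat.lt_succ_self k)]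

lemma exists_den_le_lt (hA : ∀ m, 2 ≤ A m) {n : ℤ} (hn : 1 ≤ n) :
    ∃ k, den A k ≤ n ∧ n < den A (k + 1) := by
  have hle (k : ℕ) : (k : ℤ) ≤ den A k := by
    induction k with
    | zero => simp
    | succ k ih => push_cast; linarith [den_strictMono hA (Nat.lt_succ_self k)]
  have htendsto : Filter.Tendsto (den A) Filter.atTop Filter.atTop :=
    Filter.tendsto_atTop_mono hle tendsto_natCast_atTop_atTop
  obtain ⟨k, hk, hk'⟩ := (den_strictMono hA).exists_between_of_tendsto_atTop htendsto
    (x := n + 1) (by rw [den_zero]; linarith)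
  exact ⟨k, by linarith, by linarith⟩

lemma err_mul_den_succ_bounds (hA : ∀ m, 2 ≤ A m) (k : ℕ) :
    3 / 4 ≤ err A k * den A (k + 1) ∧ err A k * den A (k + 1) ≤ 1 := by
  have hq (j : ℕ) : (0 : ℝ) < den A j := by exact_mod_cast den_pos hA j
  set x : ℕ → ℝ := fun j => (num A j : ℝ) / den A j with hx_def
  set t : ℕ → ℝ := fun j => 1 / ((den A j : ℝ) * den A (j + 1)) with ht_def
  have hx (j : ℕ) : x (j + 1) = x j + (-1) ^ j * t j := by
    have h := congrArg (fun n : ℤ => (n : ℝ)) (num_succ_mul_den_sub A j)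
    push_cast at h
    have := hq j
    have := hq (j + 1)
    simp only [hx_def, ht_def]
    field_simp
    linear_combination h
  have ht : Antitone t := antitone_nat_of_succ_le fun j => by
    simp only [ht_def]
    have := hq j
    have := hq (j + 1)
    gcongr <;> exact (den_strictMono hA).monotone (by omega)
  obtain ⟨hlo, hhi⟩ := alternating_bounds hx ht
    (fun j => (one_div_pos.2 (mul_pos (hq j) (hq (j + 1)))).le) k
  have := hq k
  have := hq (k + 1)
  have := hq (k + 2)
  have herr : err A k * den A (k + 1) =
      den A k * den A (k + 1) * ((-1) ^ k * ((⨆ j, x (2 * j)) - x k)) := by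
    simp only [err, limit, hx_def]
    field_simp
  have h4 : (den A k : ℝ) / den A (k + 2) ≤ 1 / 4 := by
    rw [div_le_iff₀ (hq _)]
    have : 4 * den A k ≤ den A (k + 2) := by
      linarith [two_mul_den_le hA k, two_mul_den_le hA (k + 1)]
    have : 4 * (den A k : ℝ) ≤ den A (k + 2) := by exact_mod_cast this
    linarith
  rw [herr]
  constructor
  · calc (3 / 4 : ℝ) ≤ 1 - den A k / den A (k + 2) := by linarith
      _ = den A k * den A (k + 1) * (t k - t (k + 1)) := by simp only [ht_def]; field_simp
      _ ≤ _ := mul_le_mul_of_nonneg_left hlo (by positivity)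
  · calc _ ≤ (den A k : ℝ) * den A (k + 1) * t k :=
          mul_le_mul_of_nonneg_left hhi (by positivity)
      _ = 1 := by simp only [ht_def]; field_simp

lemma err_pos (hA : ∀ m, 2 ≤ A m) (k : ℕ) : 0 < err A k := by
  have h := (err_mul_den_succ_bounds hA k).1
  have hq : (0 : ℝ) < den A (k + 1) := by exact_mod_cast den_pos hA (k + 1)
  nlinarith

lemma err_strictAnti (hA : ∀ m, 2 ≤ A m) : StrictAnti (err A) :=
  strictAnti_nat_of_succ_lt fun k => by
    have h₁ := (err_mul_den_succ_bounds hA k).1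
    have h₂ := (err_mul_den_succ_bounds hA (k + 1)).2
    have h₃ : 2 * (den A (k + 1) : ℝ) ≤ den A (k + 2) := by
      exact_mod_cast two_mul_den_le hA (k + 1)
    have hq : (0 : ℝ) < den A (k + 1) := by exact_mod_cast den_pos hA (k + 1)
    nlinarith [err_pos hA (k + 1)]

lemma err_zero : err A 0 = limit A := by
  simp [err]

lemma limit_pos (hA : ∀ m, 2 ≤ A m) : 0 < limit A :=
  err_zero (A := A) ▸ err_pos hA 0

lemma limit_le_half (hA : ∀ m, 2 ≤ A m) : limit A ≤ 1 / 2 := by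
  have h := (err_mul_den_succ_bounds hA 0).2
  have h2 : (2 : ℝ) ≤ A 1 := by exact_mod_cast hA 1
  rw [err_zero, zero_add, den_one] at h
  nlinarith [limit_pos hA]

variable (A) in
def vec (k : ℕ) : Fin 2 → ℤ := ![den A k, -num A k]

variable (A) in
def lform (z : Fin 2 → ℤ) : ℝ := limit A * z 0 + z 1

variable (A) in
def form : E 2 := !₂[limit A, 1]

lemma inner_form (z : Fin 2 → ℤ) : ⟪form A, toE 2 z⟫_ℝ = lform A z := by
  rw [form, inner_toE_two, one_mul, lform]

lemma smul_add_smul_vec_zero (k : ℕ) (a b : ℤ) :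
    (a • vec A k + b • vec A (k + 1)) 0 = a * den A k + b * den A (k + 1) := by
  simp [vec]

lemma lform_smul_add_smul (k : ℕ) (a b : ℤ) :
    lform A (a • vec A k + b • vec A (k + 1)) =
      (-1) ^ k * (a * err A k - b * err A (k + 1)) := by
  rcases neg_one_pow_eq_or ℝ k with h | h <;> simp [lform, vec, err, pow_succ, h] <;> ring

lemma abs_lform_vec (hA : ∀ m, 2 ≤ A m) (k : ℕ) : |lform A (vec A k)| = err A k := by
  simpa [abs_of_pos (err_pos hA k)] using congrArg abs (lform_smul_add_smul (A := A) k 1 0)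

variable (A) in
lemma exists_eq_smul_add_smul (k : ℕ) (z : Fin 2 → ℤ) :
    ∃ a b : ℤ, z = a • vec A k + b • vec A (k + 1) := by
  have hd := num_succ_mul_den_sub A k
  have hs : ((-1 : ℤ) ^ k) ^ 2 = 1 := by rw [← pow_mul, mul_comm, pow_mul]; simp
  refine ⟨(-1) ^ k * (num A (k + 1) * z 0 + den A (k + 1) * z 1),
    -(-1) ^ k * (num A k * z 0 + den A k * z 1), ?_⟩
  ext i
  fin_cases i
  · simp [vec]
    linear_combination (-(-1) ^ k * z 0) * hd - z 0 * hs
  · simp [vec]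
    linear_combination (-(-1) ^ k * z 1) * hd - z 1 * hs

lemma abs_lform_smul_add_smul (hA : ∀ m, 2 ≤ A m) (k : ℕ) {a b : ℤ} (hab : a * b ≤ 0) :
    |lform A (a • vec A k + b • vec A (k + 1))| =
      |(a : ℝ)| * err A k + |(b : ℝ)| * err A (k + 1) := by
  have he := err_pos hA k
  have he' := err_pos hA (k + 1)
  rw [lform_smul_add_smul, abs_mul, abs_neg_one_pow, one_mul, sub_eq_add_neg,
    abs_add_eq_add_abs_iff _ _ |>.2, abs_mul, abs_neg, abs_mul, abs_of_pos he, abs_of_pos he']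
  have hab' : (a : ℝ) * b ≤ 0 := by exact_mod_cast hab
  rcases lt_trichotomy (a : ℝ) 0 with ha | ha | ha
  · have hb : (0 : ℝ) ≤ b := by nlinarith
    right; constructor <;> nlinarith
  · rcases le_total 0 (b : ℝ) with hb | hb
    · right; constructor <;> nlinarith
    · left; constructor <;> nlinarith
  · have hb : (b : ℝ) ≤ 0 := by nlinarith
    left; constructor <;> nlinarith

lemma isBestApprox_form_iff (z : Fin 2 → ℤ) :
    IsBestApprox 2 (form A) z ↔ z 0 ≠ 0 ∧ ∀ z' : Fin 2 → ℤ, z' 0 ≠ 0 →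
      (|z' 0| ≤ |z 0| → |lform A z| ≤ |lform A z'|) ∧
      (|z' 0| < |z 0| → |lform A z| < |lform A z'|) := by
  simp only [IsBestApprox, inner_form, pr_toE_two_ne_zero_iff, norm_pr_toE_two, ← Int.cast_abs,
    Int.cast_le, Int.cast_lt]

lemma err_le_abs_lform (hA : ∀ m, 2 ≤ A m) {k : ℕ} {z : Fin 2 → ℤ} (hz : z 0 ≠ 0)
    (hlt : |z 0| < den A (k + 1)) : err A k ≤ |lform A z| := by
  obtain ⟨a, b, rfl⟩ := exists_eq_smul_add_smul A k z
  rw [smul_add_smul_vec_zero] at hz hlt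
  obtain ⟨ha, hab⟩ := ne_zero_and_mul_nonpos_of_abs_add_lt (den_pos hA k).le hz hlt
  have ha' : (1 : ℝ) ≤ |(a : ℝ)| := by exact_mod_cast Int.one_le_abs ha
  rw [abs_lform_smul_add_smul hA k hab]
  nlinarith [err_pos hA k, err_pos hA (k + 1), abs_nonneg (b : ℝ)]

lemma isBestApprox_vec (hA : ∀ m, 2 ≤ A m) (k : ℕ) : IsBestApprox 2 (form A) (vec A k) := by
  have hq : |vec A k 0| = den A k := abs_of_pos (den_pos hA k)
  refine (isBestApprox_form_iff _).2
    ⟨(den_pos hA k).ne', fun z hz => ⟨fun hle => ?_, fun hlt => ?_⟩⟩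
  · rw [abs_lform_vec hA]
    exact err_le_abs_lform hA hz (by linarith [den_strictMono hA k.lt_succ_self])
  · rw [abs_lform_vec hA]
    rw [hq] at hlt
    cases k with
    | zero => rw [den_zero] at hlt; exact absurd (Int.one_le_abs hz) (not_le.2 hlt)
    | succ j => exact (err_strictAnti hA j.lt_succ_self).trans_le (err_le_abs_lform hA hz hlt)

lemma exists_eq_of_isBestApprox (hA : ∀ m, 2 ≤ A m) {z : Fin 2 → ℤ}
    (hz : IsBestApprox 2 (form A) z) : ∃ k, |z 0| = den A k ∧ |lform A z| = err A k := by
  obtain ⟨hz0, hbest⟩ := (isBestApprox_form_iff z).1 hz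
  obtain ⟨k, hk, hk'⟩ := exists_den_le_lt hA (Int.one_le_abs hz0)
  have hq : |vec A k 0| = den A k := abs_of_pos (den_pos hA k)
  obtain ⟨hle, hlt⟩ := hbest (vec A k) (den_pos hA k).ne'
  rw [hq, abs_lform_vec hA] at hle hlt
  have heq : |lform A z| = err A k := le_antisymm (hle hk) (err_le_abs_lform hA hz0 hk')
  refine ⟨k, ?_, heq⟩
  by_contra hne
  exact (hlt (lt_of_le_of_ne hk (Ne.symm hne))).ne heq

lemma norm_toE_le_two_mul_den (hA : ∀ m, 2 ≤ A m) {k : ℕ} {z : Fin 2 → ℤ}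
    (h0 : |z 0| = den A k) (hL : |lform A z| = err A k) : ‖toE 2 z‖ ≤ 2 * den A k := by
  have hq : (1 : ℝ) ≤ den A k := by exact_mod_cast den_pos hA k
  have hq' : (2 : ℝ) ≤ den A (k + 1) := by
    exact_mod_cast (by linarith [two_mul_den_le hA k, den_pos hA k] : 2 ≤ den A (k + 1))
  have h0' : |(z 0 : ℝ)| = den A k := by exact_mod_cast h0
  have he : err A k ≤ 1 / 2 := by
    nlinarith [(err_mul_den_succ_bounds hA k).2, err_pos hA k]
  have hz1 : |(z 1 : ℝ)| ≤ |lform A z| + limit A * |(z 0 : ℝ)| := by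
    have : (z 1 : ℝ) = lform A z - limit A * z 0 := by rw [lform]; ring
    rw [this]
    refine (abs_sub _ _).trans_eq ?_
    rw [abs_mul, abs_of_pos (limit_pos hA)]
  rw [hL, h0'] at hz1
  nlinarith [norm_toE_two_le z, limit_le_half hA]

lemma three_eighths_le_abs_lform_mul (hA : ∀ m, 2 ≤ A m) {k : ℕ} {z : Fin 2 → ℤ}
    (hk : den A k ≤ |z 0|) (hlt : |z 0| < den A (k + 1)) (hz : ∀ m : ℤ, z ≠ m • vec A k) :
    3 / 8 ≤ |lform A z| * |(z 0 : ℝ)| := by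
  obtain ⟨a, b, rfl⟩ := exists_eq_smul_add_smul A k z
  have hb : b ≠ 0 := by rintro rfl; exact hz a (by simp)
  rw [smul_add_smul_vec_zero] at hk hlt ⊢
  obtain ⟨ha, hab⟩ := ne_zero_and_mul_nonpos_of_abs_add_lt (den_pos hA k).le
    (abs_pos.1 ((den_pos hA k).trans_le hk)) hlt
  rw [abs_lform_smul_add_smul hA k hab]
  have hq : (0 : ℝ) < den A k := by exact_mod_cast den_pos hA k
  have hq' : (0 : ℝ) < den A (k + 1) := by exact_mod_cast den_pos hA (k + 1)
  have ha' : (1 : ℝ) ≤ |(a : ℝ)| := by exact_mod_cast Int.one_le_abs ha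
  have hb' : (1 : ℝ) ≤ |(b : ℝ)| := by exact_mod_cast Int.one_le_abs hb
  have hk' : (den A k : ℝ) ≤ |(a * den A k + b * den A (k + 1) : ℝ)| := by exact_mod_cast hk
  have htri : |(b : ℝ)| * den A (k + 1) - |(a : ℝ)| * den A k ≤
      |(a * den A k + b * den A (k + 1) : ℝ)| := by
    simpa [abs_mul, abs_of_pos hq, abs_of_pos hq', add_comm] using
      abs_sub_abs_le_abs_add ((b : ℝ) * den A (k + 1)) (a * den A k)
  set Z := |(a * den A k + b * den A (k + 1) : ℝ)|
  have he := err_pos hA k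
  have h34 := (err_mul_den_succ_bounds hA k).1
  -- Either `|a| q_k ≥ q_{k+1} / 2`, or `|z_0| ≥ |b| q_{k+1} - |a| q_k > q_{k+1} / 2`.
  have key : 3 / 8 ≤ |(a : ℝ)| * err A k * Z := by
    rcases le_total (den A (k + 1) : ℝ) (2 * |(a : ℝ)| * den A k) with hcase | hcase
    · have : (den A (k + 1) : ℝ) / 2 ≤ |(a : ℝ)| * Z := by nlinarith
      nlinarith
    · have hZ : (den A (k + 1) : ℝ) / 2 ≤ Z := by nlinarith
      nlinarith [mul_le_mul_of_nonneg_left hZ he.le,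
        mul_nonneg (sub_nonneg.2 ha') (mul_nonneg he.le (abs_nonneg _ : 0 ≤ Z))]
  push_cast
  refine key.trans (mul_le_mul_of_nonneg_right ?_ (abs_nonneg _))
  nlinarith [mul_nonneg (abs_nonneg (b : ℝ)) (err_pos hA (k + 1)).le]

lemma three_eighths_le_abs_lform_mul_norm (hA : ∀ m, 2 ≤ A m) {z : Fin 2 → ℤ}
    (hz0 : z 0 ≠ 0)
    (hz : ¬ ∃ w : Fin 2 → ℤ, ∃ m : ℤ, IsBestApprox 2 (form A) w ∧ z = m • w) :
    3 / 8 ≤ |lform A z| * ‖toE 2 z‖ := by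
  obtain ⟨k, hk, hk'⟩ := exists_den_le_lt hA (Int.one_le_abs hz0)
  calc 3 / 8 ≤ |lform A z| * |(z 0 : ℝ)| :=
        three_eighths_le_abs_lform_mul hA hk hk' fun m hm =>
          hz ⟨vec A k, m, isBestApprox_vec hA k, hm⟩
    _ ≤ _ := mul_le_mul_of_nonneg_left (abs_le_norm_toE_two z) (abs_nonneg _)

def rpowRule (β : ℝ) (m : ℤ) : ℤ := max 2 ⌈(m : ℝ) ^ β⌉

lemma two_le_rpowRule (β : ℝ) (m : ℤ) : 2 ≤ rpowRule β m := le_max_left _ _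

lemma den_rpowRule_succ_bounds {β : ℝ} (hβ : 0 ≤ β) (k : ℕ) :
    (den (rpowRule β) k : ℝ) ^ β * den (rpowRule β) k ≤ den (rpowRule β) (k + 1) ∧
      (den (rpowRule β) (k + 1) : ℝ) ≤
        4 * ((den (rpowRule β) k : ℝ) ^ β * den (rpowRule β) k) := by
  set q := den (rpowRule β) k
  obtain ⟨h₁, h₂⟩ := den_succ_bounds (two_le_rpowRule β) k
  have h₁' : (rpowRule β q : ℝ) * q ≤ den (rpowRule β) (k + 1) := by exact_mod_cast h₁
  have h₂' : (den (rpowRule β) (k + 1) : ℝ) ≤ (rpowRule β q + 1) * q := by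
    exact_mod_cast h₂
  have hq : (1 : ℝ) ≤ q := by exact_mod_cast den_pos (two_le_rpowRule β) k
  have hqβ : 1 ≤ (q : ℝ) ^ β := Real.one_le_rpow hq hβ
  have hlo : (q : ℝ) ^ β ≤ rpowRule β q :=
    (Int.le_ceil _).trans (by exact_mod_cast le_max_right _ _)
  have hhi : (rpowRule β q : ℝ) ≤ q ^ β + 2 := by
    rw [rpowRule, Int.cast_max]
    exact max_le (by push_cast; linarith) (by linarith [Int.ceil_lt_add_one ((q : ℝ) ^ β)])
  constructor <;> nlinarith

lemma abs_lform_mul_norm_bounds {β : ℝ} (hβ : 0 ≤ β) {z : Fin 2 → ℤ}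
    (hz : IsBestApprox 2 (form (rpowRule β)) z) :
    3 / 16 * ‖toE 2 z‖ ^ (-β) ≤ |lform (rpowRule β) z| * ‖toE 2 z‖ ∧
      |lform (rpowRule β) z| * ‖toE 2 z‖ ≤ 2 * 2 ^ β * ‖toE 2 z‖ ^ (-β) := by
  have hA := two_le_rpowRule β
  obtain ⟨k, h0, hL⟩ := exists_eq_of_isBestApprox hA hz
  have hq : (1 : ℝ) ≤ den (rpowRule β) k := by exact_mod_cast den_pos hA k
  have h0' : |(z 0 : ℝ)| = den (rpowRule β) k := by exact_mod_cast h0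
  have hNq := norm_toE_le_two_mul_den hA h0 hL
  obtain ⟨he₁, he₂⟩ := err_mul_den_succ_bounds hA k
  obtain ⟨hq₁, hq₂⟩ := den_rpowRule_succ_bounds hβ k
  have he := err_pos hA k
  set N := ‖toE 2 z‖
  set q : ℝ := (den (rpowRule β) k : ℝ)
  have hqN : q ≤ N := h0' ▸ abs_le_norm_toE_two z
  have hqβ : 0 < q ^ β := Real.rpow_pos_of_pos (by linarith) β
  have hNβ : q ^ β ≤ N ^ β := Real.rpow_le_rpow (by linarith) hqN hβ
  have hNβ' : N ^ β ≤ 2 ^ β * q ^ β := by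
    rw [← Real.mul_rpow zero_le_two (by linarith)]
    exact Real.rpow_le_rpow (norm_nonneg _) hNq hβ
  rw [hL, Real.rpow_neg (norm_nonneg _)]
  constructor
  · calc 3 / 16 * (N ^ β)⁻¹ ≤ 3 / 16 * (q ^ β)⁻¹ := by gcongr
      _ ≤ err (rpowRule β) k * q := by
          rw [← div_eq_mul_inv, div_le_iff₀ hqβ]
          nlinarith
      _ ≤ err (rpowRule β) k * N := by gcongr
  · calc err (rpowRule β) k * N ≤ err (rpowRule β) k * (2 * q) := by gcongr
      _ ≤ 2 * (q ^ β)⁻¹ := by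
          rw [← div_eq_mul_inv, le_div_iff₀ hqβ]
          nlinarith
      _ ≤ 2 * (2 ^ β * (N ^ β)⁻¹) := by
          gcongr
          rw [← div_eq_mul_inv, le_div_iff₀ (hqβ.trans_le hNβ), inv_mul_le_iff₀ hqβ]
          linarith
      _ = 2 * 2 ^ β * (N ^ β)⁻¹ := by ring

end Convergents

theorem stmt2 (β : ℝ) (hβ : 0 ≤ β) :
    ∃ α : E 2, α 1 = 1 ∧
      ∃ c1 c2 c3 : ℝ, 0 < c1 ∧ 0 < c2 ∧ 0 < c3 ∧
        (∀ z : Fin 2 → ℤ, IsBestApprox 2 α z →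
          c1 * ‖toE 2 z‖ ^ (-β) ≤ |⟪α, toE 2 z⟫_ℝ| * ‖toE 2 z‖ ∧
          |⟪α, toE 2 z⟫_ℝ| * ‖toE 2 z‖ ≤ c2 * ‖toE 2 z‖ ^ (-β)) ∧
        (∀ z : Fin 2 → ℤ, z 0 ≠ 0 →
          (¬ ∃ w : Fin 2 → ℤ, ∃ m : ℤ, IsBestApprox 2 α w ∧ z = m • w) →
          c3 ≤ |⟪α, toE 2 z⟫_ℝ| * ‖toE 2 z‖) := by
  refine ⟨Convergents.form (Convergents.rpowRule β), by simp [Convergents.form],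
    3 / 16, 2 * 2 ^ β, 3 / 8, by norm_num, by positivity, by norm_num,
    fun z hz => ?_, fun z hz0 hz => ?_⟩
  · simpa only [Convergents.inner_form] using Convergents.abs_lform_mul_norm_bounds hβ hz
  · simpa only [Convergents.inner_form] using
      Convergents.three_eighths_le_abs_lform_mul_norm (Convergents.two_le_rpowRule β) hz0 hz
end
end

section
/- Let d ≥ 3 and let z_1, …, z_d ∈ ℤ^d be a basis of ℤ^d such that z̲_1 ≠ 0 and z̲_2, …, z̲_d are linearly independent in ℝ^{d−1}. Then for each α ∈ 𝔖_2 we have (1/(D_{2,d−1} B_1^{d−1}))·(1 − 1/(2 B_1 B_2)) ≤ |L_α(z_1)| · |z̲_1|^{d−1} ≤ (1/(D_{2,d−1} B_1^{d−1}))·(1 + 1/(2 B_1 B_2)). -/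
/-!
Write `c = ⟪α₂, z₁⟫`. Since `α₂` has last coordinate `1` and is orthogonal to `z₂, …, z_d`,
replacing the last row of the unimodular matrix `(z₁ ⋯ z_d)` by `α₂ᵀ (z₁ ⋯ z_d) = (c, 0, …, 0)`
keeps its determinant, and expanding along that row gives `1 = |c| · det Λ̲_{2,d-1}`.
For `α ∈ 𝔖₂` the difference `α - α₂` has last coordinate `0`, so
`|L_α(z₁) - c| ≤ |α - α₂| |z̲₁| ≤ R₂ |z̲₁|`; multiplying by `|z̲₁|^{d-1}` and expressing
`D_{2,d-1} B₁^{d-1} = det Λ̲_{2,d-1} / |z̲₁|^{d-1}` and `B₁ B₂ = |z̲₃| / |z̲₁|` gives the bounds.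
-/

open scoped InnerProductSpace

noncomputable section

open Matrix in
theorem Matrix.det_eq_of_vecMul_eq_zero_of_ne_zero {R : Type*} [CommRing R] {m : ℕ}
    (M : Matrix (Fin (m + 1)) (Fin (m + 1)) R) (a : Fin (m + 1) → R)
    (ha : a (Fin.last m) = 1) (hzero : ∀ j, j ≠ 0 → (a ᵥ* M) j = 0) :
    M.det = (-1) ^ m * (a ᵥ* M) 0 * (M.submatrix Fin.castSucc Fin.succ).det := by
  have hrow : a ᵥ* M = ∑ i, a i • M i := by
    ext j
    simp [vecMul, dotProduct, Finset.sum_apply]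
  have hupd : (M.updateRow (Fin.last m) (a ᵥ* M)).det = M.det := by
    rw [hrow, det_updateRow_sum, ha, one_smul]
  rw [← hupd, det_succ_row _ (Fin.last m),
    Fintype.sum_eq_single 0 fun j hj => by simp [hzero j hj], submatrix_updateRow_succAbove]
  simp

lemma gramVol_eq_abs_det {m : ℕ} (v : Fin m → E m) :
    gramVol v = |(Matrix.of fun i j : Fin m => v i j).det| := by
  have h : (Matrix.of fun i j : Fin m => ⟪v i, v j⟫_ℝ) =
      (Matrix.of fun i j : Fin m => v i j) * (Matrix.of fun i j : Fin m => v i j).transpose := by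
    ext i j
    simp [Matrix.mul_apply, PiLp.inner_apply, mul_comm]
  rw [gramVol, h, Matrix.det_mul, Matrix.det_transpose, ← sq, Real.sqrt_sq_eq_abs]

lemma ne_zero_of_gramVol_ne_zero {n m : ℕ} {v : Fin m → E n} (h : gramVol v ≠ 0) (i : Fin m) :
    v i ≠ 0 := by
  intro hi
  refine h ?_
  rw [gramVol, Matrix.det_eq_zero_of_row_eq_zero i fun j => by simp [hi], Real.sqrt_zero]

lemma inner_eq_inner_pr {m : ℕ} {x : E (m + 1)} (hx : x (Fin.last m) = 0) (y : E (m + 1)) :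
    ⟪x, y⟫_ℝ = ⟪pr (m + 1) x, pr (m + 1) y⟫_ℝ := by
  simp only [PiLp.inner_apply, Fin.sum_univ_castSucc, hx, inner_zero_left, add_zero]
  rfl

lemma norm_pr_le {m : ℕ} (x : E (m + 1)) : ‖pr (m + 1) x‖ ≤ ‖x‖ := by
  rw [EuclideanSpace.norm_eq, EuclideanSpace.norm_eq, Fin.sum_univ_castSucc]
  exact Real.sqrt_le_sqrt (le_add_of_nonneg_right (by positivity))

lemma abs_inner_sub_inner_le {m : ℕ} {α β : E (m + 1)} (h : α (Fin.last m) = β (Fin.last m))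
    (v : E (m + 1)) : |⟪α, v⟫_ℝ - ⟪β, v⟫_ℝ| ≤ ‖α - β‖ * ‖pr (m + 1) v‖ := by
  have hlast : (α - β) (Fin.last m) = 0 := by simp [h]
  rw [← inner_sub_left, inner_eq_inner_pr hlast]
  exact (abs_real_inner_le_norm _ _).trans
    (mul_le_mul_of_nonneg_right (norm_pr_le _) (norm_nonneg _))

open Matrix in
lemma abs_inner_mul_detL_eq_one {m : ℕ} (z : ℕ → Fin (m + 1) → ℤ)
    (hbasis : IsZBasis (m + 1) (fun j => z (j.1 + 1))) (α : E (m + 1))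
    (hα : α (Fin.last m) = 1) (hperp : ∀ i : Fin m, ⟪α, toE (m + 1) (z (i.1 + 2))⟫_ℝ = 0) :
    |⟪α, toE (m + 1) (z 1)⟫_ℝ| * detL (m + 1) z 2 m = 1 := by
  set M : Matrix (Fin (m + 1)) (Fin (m + 1)) ℝ := of fun i j => (z (j.1 + 1) i : ℝ)
  have hM : |M.det| = 1 := by
    have : M.det = ((of fun i j : Fin (m + 1) => z (j.1 + 1) i).det : ℝ) :=
      (RingHom.map_det (Int.castRingHom ℝ) _).symm
    rw [this, ← Int.cast_abs, Int.isUnit_iff_abs_eq.mp hbasis, Int.cast_one]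
  have hvecMul : ∀ j, (α ᵥ* M) j = ⟪α, toE (m + 1) (z (j.1 + 1))⟫_ℝ := fun j => by
    simp [M, vecMul, dotProduct, PiLp.inner_apply, toE, mul_comm]
  have hminor : detL (m + 1) z 2 m = |(M.submatrix Fin.castSucc Fin.succ).det| := by
    rw [detL, gramVol_eq_abs_det, ← det_transpose]
    congr 3
    ext i j
    simp only [M, pr, toE, of_apply, Fin.val_succ]
    rw [add_comm 2]
    rfl
  rw [det_eq_of_vecMul_eq_zero_of_ne_zero M α hα, hvecMul, abs_mul, abs_mul] at hM
  · simpa [hminor] using hM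
  · intro j hj
    obtain ⟨i, rfl⟩ := Fin.exists_succ_eq.mpr hj
    rw [hvecMul, Fin.val_succ]
    exact hperp i

lemma Dq_mul_Bq_pow (d : ℕ) (z : ℕ → Fin d → ℤ) (k l : ℕ) (h : pr d (toE d (z (k + 1))) ≠ 0) :
    Dq d z (k + 1) l * Bq d z k ^ l = detL d z (k + 1) l / ‖pr d (toE d (z k))‖ ^ l := by
  rw [Dq, Bq, div_pow, div_mul_div_cancel₀ (pow_ne_zero _ (norm_ne_zero_iff.mpr h))]

lemma Bq_mul_Bq (d : ℕ) (z : ℕ → Fin d → ℤ) (k : ℕ) (h : pr d (toE d (z (k + 1))) ≠ 0) :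
    Bq d z k * Bq d z (k + 1) = ‖pr d (toE d (z (k + 2)))‖ / ‖pr d (toE d (z k))‖ := by
  rw [Bq, Bq, mul_comm, div_mul_div_cancel₀ (norm_ne_zero_iff.mpr h)]

lemma bounds_of_abs_sub_le {x c Δ a b : ℝ} (n : ℕ) (ha : 0 ≤ a) (hc : |c| * Δ = 1)
    (hx : |x - c| ≤ 1 / (2 * b * Δ) * a) :
    1 / (Δ / a ^ n) * (1 - 1 / (2 * (b / a))) ≤ |x| * a ^ n ∧
      |x| * a ^ n ≤ 1 / (Δ / a ^ n) * (1 + 1 / (2 * (b / a))) := by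
  have hc' : |c| = 1 / Δ := eq_one_div_of_mul_eq_one_left hc
  have hlow : |c| - |x - c| ≤ |x| := by linarith [abs_sub_abs_le_abs_sub c x, abs_sub_comm x c]
  have hup : |x| ≤ |c| + |x - c| := by linarith [abs_sub_abs_le_abs_sub x c]
  have han : 0 ≤ a ^ n := pow_nonneg ha n
  constructor
  · calc 1 / (Δ / a ^ n) * (1 - 1 / (2 * (b / a)))
          = (1 / Δ - 1 / (2 * b * Δ) * a) * a ^ n := by
            rw [one_div_div, one_div (2 * (b / a)), mul_inv, inv_div]; ring
      _ ≤ |x| * a ^ n := by gcongr; linarith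
  · calc |x| * a ^ n ≤ (1 / Δ + 1 / (2 * b * Δ) * a) * a ^ n := by gcongr; linarith
      _ = 1 / (Δ / a ^ n) * (1 + 1 / (2 * (b / a))) := by
            rw [one_div_div, one_div (2 * (b / a)), mul_inv, inv_div]; ring

theorem stmt6 (d : ℕ) (hd : 3 ≤ d) (z : ℕ → Fin d → ℤ)
    (hbasis : IsZBasis d (fun j => z (j.1 + 1)))
    (α2 : E d) (hα2pi : α2 ⟨d - 1, by omega⟩ = 1)
    (hα2perp : ∀ i : Fin (d - 1), ⟪α2, toE d (z (i.1 + 2))⟫_ℝ = 0)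
    (α : E d) (hαpi : α ⟨d - 1, by omega⟩ = 1) (hαS : ‖α - α2‖ ≤ Rq d z 2) :
    1 / (Dq d z 2 (d - 1) * Bq d z 1 ^ (d - 1)) * (1 - 1 / (2 * Bq d z 1 * Bq d z 2)) ≤
        |⟪α, toE d (z 1)⟫_ℝ| * ‖pr d (toE d (z 1))‖ ^ (d - 1) ∧
      |⟪α, toE d (z 1)⟫_ℝ| * ‖pr d (toE d (z 1))‖ ^ (d - 1) ≤
        1 / (Dq d z 2 (d - 1) * Bq d z 1 ^ (d - 1)) * (1 + 1 / (2 * Bq d z 1 * Bq d z 2)) := by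
  obtain ⟨m, rfl⟩ : ∃ m, d = m + 1 := ⟨d - 1, by omega⟩
  have hkey := abs_inner_mul_detL_eq_one z hbasis α2 hα2pi hα2perp
  have hz2 : pr (m + 1) (toE (m + 1) (z 2)) ≠ 0 :=
    ne_zero_of_gramVol_ne_zero (right_ne_zero_of_mul_eq_one hkey) ⟨0, by omega⟩
  have hclose : |⟪α, toE (m + 1) (z 1)⟫_ℝ - ⟪α2, toE (m + 1) (z 1)⟫_ℝ| ≤
      Rq (m + 1) z 2 * ‖pr (m + 1) (toE (m + 1) (z 1))‖ :=
    (abs_inner_sub_inner_le (hαpi.trans hα2pi.symm) _).trans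
      (mul_le_mul_of_nonneg_right hαS (norm_nonneg _))
  rw [Dq_mul_Bq_pow _ _ 1 _ hz2, mul_assoc, Bq_mul_Bq _ _ 1 hz2]
  exact bounds_of_abs_sub_le _ (norm_nonneg _) hkey hclose
end
end
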